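/- arXiv:1307.6808 — 5 statements merged into one kernel-verified Lean document; each statement's English description precedes it below -/
import Mathlib

section
/- Let n ≥ 2, c = (c_1,…,c_n) ∈ ℂ^n, and k ∈ {1,…,n−1}. Let c^{(s_k)} denote the tuple obtained from c by exchanging c_k and c_{k+1}. Then on V^{⊗n}: P_{k,k+1} R_{k+1,k}(c_{k+1}−c_k) · F(c) = F(c^{(s_k)}) · P_{k,k+1} R_{k,k+1}(c_k−c_{k+1}), where R_{k+1,k}(u) := P R(u) P acting on the factors k, k+1. -/
/-!
We model the finite-dimensional complex vector space `V` as `ℂ^N` (i.e. `Fin N → ℂ`),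
so that `V^{⊗ n}` is `(Fin n → Fin N) → ℂ` and endomorphisms of `V^{⊗ n}` are matrices
indexed by multi-indices `Fin n → Fin N`.
-/

open scoped BigOperators

noncomputable section

/-- Endomorphisms of `V ⊗ V` for `V = ℂ^N`. -/
abbrev End2 (N : ℕ) := Matrix (Fin N × Fin N) (Fin N × Fin N) ℂ

/-- Endomorphisms of `V^{⊗ n}` for `V = ℂ^N`. -/
abbrev EndT (N n : ℕ) := Matrix (Fin n → Fin N) (Fin n → Fin N) ℂ

/-- `X_{a,b}` : the endomorphism `X` of `V ⊗ V` applied to the tensor factors `a` and `b`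
(in that order) of `V^{⊗ n}`, and the identity on all other factors. -/
def op2 (N n : ℕ) (X : End2 N) (a b : Fin n) : EndT N n :=
  fun f g => X (f a, f b) (g a, g b) *
    ∏ i : Fin n, if i ≠ a ∧ i ≠ b then (if f i = g i then (1 : ℂ) else 0) else 1

/-- The flip (permutation) operator `P : x ⊗ y ↦ y ⊗ x` on `V ⊗ V`. -/
def flipMat (N : ℕ) : End2 N := fun p q => if p.1 = q.2 ∧ p.2 = q.1 then 1 else 0

/-- `R` is a solution of the Yang--Baxter equation (with additive spectral parameters)
on `V ⊗ V ⊗ V`:  `R₁₂(u) R₁₃(u+v) R₂₃(v) = R₂₃(v) R₁₃(u+v) R₁₂(u)`. -/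
def YangBaxter (N : ℕ) (R : ℂ → End2 N) : Prop :=
  ∀ u v : ℂ,
    op2 N 3 (R u) 0 1 * op2 N 3 (R (u + v)) 0 2 * op2 N 3 (R v) 1 2 =
    op2 N 3 (R v) 1 2 * op2 N 3 (R (u + v)) 0 2 * op2 N 3 (R u) 0 1

/-- The fused operator `R_{c,c'}(u)`, acting on `V^{⊗ m}`, where the `n` factors of the first
block are embedded via `a` and the `n'` factors of the second block via `b`:
`R_{c,c'}(u) = ∏→_{i=1..n'} [ R_{n,i'}(u+c_n−c'_i) ⋯ R_{2,i'}(u+c_2−c'_i) R_{1,i'}(u+c_1−c'_i) ]`. -/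
def fusedOp (N : ℕ) (R : ℂ → End2 N) {m n n' : ℕ} (a : Fin n → Fin m) (b : Fin n' → Fin m)
    (c : Fin n → ℂ) (c' : Fin n' → ℂ) (u : ℂ) : EndT N m :=
  ((List.finRange n').map fun i =>
    (((List.finRange n).reverse).map fun k =>
      op2 N m (R (u + c k - c' i)) (a k) (b i)).prod).prod

/-- The list of pairs `(i,j)` with `i < j`, in lexicographic order. -/
def lexPairs (n : ℕ) : List (Fin n × Fin n) :=
  (List.finRange n).flatMap fun i =>
    ((List.finRange n).filter fun j => decide (i < j)).map fun j => (i, j)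

/-- The operator `F(c) = ∏→_{1 ≤ i < j ≤ n} R_{i,j}(c_i − c_j)` on `V^{⊗ n}`
(product over the pairs `i < j` in lexicographic order). -/
def Fop (N : ℕ) (R : ℂ → End2 N) {n : ℕ} (c : Fin n → ℂ) : EndT N n :=
  ((lexPairs n).map fun p => op2 N n (R (c p.1 - c p.2)) p.1 p.2).prod

/-- The endomorphism of `V^{⊗ n}` embedded into `V^{⊗ m}`, acting on the factors listed
by `e` and identically on all other factors. -/
def opBlock (N : ℕ) {m n : ℕ} (e : Fin n → Fin m) (X : EndT N n) : EndT N m :=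
  fun f g => X (f ∘ e) (g ∘ e) *
    ∏ i : Fin m, if ∀ k, e k ≠ i then (if f i = g i then (1 : ℂ) else 0) else 1

/-- The operator `P_π` on `V^{⊗ n}` permuting the tensor factors:
`P_π (x_1 ⊗ ⋯ ⊗ x_n) = x_{π(1)} ⊗ ⋯ ⊗ x_{π(n)}`. -/
def permMat (N n : ℕ) (π : Equiv.Perm (Fin n)) : EndT N n :=
  fun f g => if f = g ∘ π then 1 else 0

/-- The tensor product of a vector of `V^{⊗ n}` and a vector of `V^{⊗ n'}`,
as a vector of `V^{⊗ (n+n')}`. -/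
def tensVec (N : ℕ) {n n' : ℕ} (x : (Fin n → Fin N) → ℂ) (y : (Fin n' → Fin N) → ℂ) :
    (Fin (n + n') → Fin N) → ℂ :=
  fun f => x (fun i => f (Fin.castAdd n' i)) * y (fun j => f (Fin.natAdd n j))

end

/-!
Split off the first row: `F(c) = (∏→_{j>1} R_{1,j}(c_1 - c_j)) · F(c_2, …, c_n)`, the second factor
acting on the factors `2, …, n`. For `k > 1` the operator `Ř = P_{k,k+1} R_{k+1,k}(c_{k+1} - c_k)`
commutes with every factor of the first row except the adjacent pair `R_{1,k} R_{1,k+1}`, which it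
swaps by one Yang–Baxter move, and the tail is the induction hypothesis transported to the factors
`2, …, n`. For `k = 1`, conjugation by `P_{1,2}` exchanges the first two rows, and repeated
Yang–Baxter moves carry `R_{2,1}` through both of them.

In lemma names, `checkR` stands for `Ř = P_{a,b} R_{b,a}(c_b - c_a)`.
-/

section YangBaxterIntertwining

open Function

variable {N m n p : ℕ}

lemma opBlock_apply (e : Fin n → Fin m) (X : EndT N n) (f g : Fin m → Fin N) :
    opBlock N e X f g =
      X (f ∘ e) (g ∘ e) * if ∀ i, (∀ k, e k ≠ i) → f i = g i then 1 else 0 := by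
  unfold opBlock
  congr 1
  convert Fintype.prod_boole (p := fun i => (∀ k, e k ≠ i) → f i = g i) using 2 with i
  split_ifs <;> simp_all

lemma op2_apply (X : End2 N) (a b : Fin n) (f g : Fin n → Fin N) :
    op2 N n X a b f g =
      X (f a, f b) (g a, g b) * if ∀ i, i ≠ a → i ≠ b → f i = g i then 1 else 0 := by
  unfold op2
  congr 1
  convert Fintype.prod_boole (p := fun i => i ≠ a → i ≠ b → f i = g i) using 2 with i
  split_ifs <;> simp_all

lemma op2_eq_opBlock (X : End2 N) (a b : Fin n) :
    op2 N n X a b = opBlock N ![a, b] (Matrix.of fun f g => X (f 0, f 1) (g 0, g 1)) := by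
  ext f g
  rw [opBlock_apply, op2_apply]
  simp [Fin.forall_fin_two, ne_comm]

lemma opBlock_one (e : Fin n → Fin m) : opBlock N e (1 : EndT N n) = 1 := by
  ext f g
  simp only [opBlock_apply, Matrix.one_apply, ite_zero_mul_ite_zero, one_mul]
  refine if_congr ⟨fun ⟨hfg, hout⟩ => funext fun i => ?_, fun hfg => by simp [hfg]⟩ rfl rfl
  by_cases hi : ∃ k, e k = i
  · obtain ⟨k, rfl⟩ := hi
    exact congrFun hfg k
  · exact hout i (not_exists.mp hi)

lemma extend_comp_eq_of_agreeOff {e : Fin n → Fin m} (he : Injective e) {f g : Fin m → Fin N}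
    (hfg : ∀ i, (∀ k, e k ≠ i) → f i = g i) : extend e (g ∘ e) f = g := by
  funext i
  by_cases hi : ∃ k, e k = i
  · obtain ⟨k, rfl⟩ := hi
    exact he.extend_apply _ _ k
  · rw [extend_apply' _ _ _ hi]
    exact hfg i (not_exists.mp hi)

lemma sum_agreeOff_eq_sum_extend {e : Fin n → Fin m} (he : Injective e) (f : Fin m → Fin N)
    (φ : (Fin m → Fin N) → ℂ) :
    (∑ g, if ∀ i, (∀ k, e k ≠ i) → f i = g i then φ g else 0) =
      ∑ q : Fin n → Fin N, φ (extend e q f) := by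
  rw [← Finset.sum_filter]
  refine Finset.sum_nbij' (· ∘ e) (extend e · f) (by simp) (fun q _ => ?_)
    (fun g hg => ?_) (fun q _ => extend_comp he q f) (fun g hg => ?_)
  · simp only [Finset.mem_filter, Finset.mem_univ, true_and]
    exact fun i hi => (extend_apply' _ _ _ (not_exists.mpr hi)).symm
  · exact extend_comp_eq_of_agreeOff he (by simpa using hg)
  · rw [extend_comp_eq_of_agreeOff he (by simpa using hg)]

lemma opBlock_mul_apply {e : Fin n → Fin m} (he : Injective e) (X : EndT N n) (M : EndT N m)
    (f h : Fin m → Fin N) :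
    (opBlock N e X * M) f h = ∑ q, X (f ∘ e) q * M (extend e q f) h := by
  calc (opBlock N e X * M) f h
      = ∑ g, if ∀ i, (∀ k, e k ≠ i) → f i = g i then X (f ∘ e) (g ∘ e) * M g h else 0 := by
        refine Finset.sum_congr rfl fun g _ => ?_
        simp only [opBlock_apply]
        split_ifs <;> simp
    _ = ∑ q, X (f ∘ e) (extend e q f ∘ e) * M (extend e q f) h :=
        sum_agreeOff_eq_sum_extend he f _
    _ = _ := by simp only [extend_comp he]

lemma opBlock_mul {e : Fin n → Fin m} (he : Injective e) (X Y : EndT N n) :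
    opBlock N e (X * Y) = opBlock N e X * opBlock N e Y := by
  ext f h
  rw [opBlock_mul_apply he, opBlock_apply, Matrix.mul_apply, Finset.sum_mul]
  refine Finset.sum_congr rfl fun q _ => ?_
  rw [opBlock_apply, extend_comp he, mul_assoc]
  congr 3
  refine propext (forall_congr' fun i => imp_congr_right fun hi => ?_)
  rw [extend_apply' _ _ _ (not_exists.mpr hi)]

@[simps]
def opBlockHom {e : Fin n → Fin m} (he : Injective e) : EndT N n →* EndT N m where
  toFun := opBlock N e
  map_one' := opBlock_one e
  map_mul' := opBlock_mul he

lemma opBlock_comp {e : Fin n → Fin m} (he : Injective e) (e' : Fin p → Fin n) (Z : EndT N p) :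
    opBlock N e (opBlock N e' Z) = opBlock N (e ∘ e') Z := by
  ext f g
  simp only [opBlock_apply, mul_assoc, ite_zero_mul_ite_zero, one_mul]
  congr 2
  refine propext ⟨fun ⟨hin, hout⟩ i hi => ?_, fun h => ⟨fun k hk => h _ ?_, fun i hi => h i ?_⟩⟩
  · by_cases hie : ∃ k, e k = i
    · obtain ⟨k, rfl⟩ := hie
      exact hin k fun k' hk' => hi k' (by rw [comp_apply, hk'])
    · exact hout i (not_exists.mp hie)
  · exact fun k' hk' => hk k' (he hk')
  · exact fun k' => hi (e' k')

lemma opBlock_mul_opBlock_apply_of_disjoint {e : Fin n → Fin m} (he : Injective e)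
    {e' : Fin p → Fin m} (hdisj : ∀ k k', e k ≠ e' k') (X : EndT N n) (Y : EndT N p)
    (f h : Fin m → Fin N) :
    (opBlock N e X * opBlock N e' Y) f h =
      X (f ∘ e) (h ∘ e) * Y (f ∘ e') (h ∘ e') *
        if ∀ i, (∀ k, e k ≠ i) → (∀ k, e' k ≠ i) → f i = h i then 1 else 0 := by
  have off_e : ∀ q : Fin n → Fin N, extend e q f ∘ e' = f ∘ e' := fun q =>
    funext fun k' => extend_apply' _ _ _ (not_exists.mpr fun k => hdisj k k')
  have agree_iff : ∀ q : Fin n → Fin N,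
      (∀ i, (∀ k, e' k ≠ i) → extend e q f i = h i) ↔
        q = h ∘ e ∧ ∀ i, (∀ k, e k ≠ i) → (∀ k, e' k ≠ i) → f i = h i := by
    refine fun q => ⟨fun hq => ⟨funext fun k => ?_, fun i hi hi' => ?_⟩, fun ⟨hq, hfh⟩ i hi' => ?_⟩
    · exact (he.extend_apply q f k).symm.trans (hq (e k) fun k' => (hdisj k k').symm)
    · rw [← hq i hi', extend_apply' _ _ _ (not_exists.mpr hi)]
    · by_cases hie : ∃ k, e k = i
      · obtain ⟨k, rfl⟩ := hie
        rw [he.extend_apply, hq, comp_apply]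
      · rw [extend_apply' _ _ _ hie]
        exact hfh i (not_exists.mp hie) hi'
  rw [opBlock_mul_apply he]
  calc _ = ∑ q, if h ∘ e = q then X (f ∘ e) q * Y (f ∘ e') (h ∘ e') *
        (if ∀ i, (∀ k, e k ≠ i) → (∀ k, e' k ≠ i) → f i = h i then 1 else 0) else 0 := by
        refine Finset.sum_congr rfl fun q _ => ?_
        simp only [opBlock_apply, off_e, if_congr (agree_iff q) rfl rfl]
        by_cases hq : h ∘ e = q
        · simp only [hq, true_and, if_true, mul_assoc]
        · simp only [Ne.symm hq, false_and, if_false, hq, mul_zero]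
    _ = _ := by rw [Finset.sum_ite_eq, if_pos (Finset.mem_univ _)]

lemma commute_opBlock_of_disjoint {e : Fin n → Fin m} (he : Injective e) {e' : Fin p → Fin m}
    (he' : Injective e') (hdisj : ∀ k k', e k ≠ e' k') (X : EndT N n) (Y : EndT N p) :
    Commute (opBlock N e X) (opBlock N e' Y) := by
  ext f h
  rw [opBlock_mul_opBlock_apply_of_disjoint he hdisj,
    opBlock_mul_opBlock_apply_of_disjoint he' fun k' k => (hdisj k k').symm, mul_comm (X _ _)]
  congr 2
  exact propext (forall_congr' fun i => imp.swap)

lemma opBlock_op2 {e : Fin n → Fin m} (he : Injective e) (X : End2 N) (a b : Fin n) :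
    opBlock N e (op2 N n X a b) = op2 N m X (e a) (e b) := by
  rw [op2_eq_opBlock, op2_eq_opBlock, opBlock_comp he]
  congr 1
  funext k
  fin_cases k <;> rfl

lemma injective_pair_of_ne {a b : Fin n} (hab : a ≠ b) : Injective ![a, b] := by
  intro k k'
  fin_cases k <;> fin_cases k' <;> simp [hab, hab.symm]

lemma commute_op2_op2 (X Y : End2 N) {a b c d : Fin n} (hab : a ≠ b) (hcd : c ≠ d)
    (hac : a ≠ c) (had : a ≠ d) (hbc : b ≠ c) (hbd : b ≠ d) :
    Commute (op2 N n X a b) (op2 N n Y c d) := by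
  rw [op2_eq_opBlock X a b, op2_eq_opBlock Y c d]
  refine commute_opBlock_of_disjoint (injective_pair_of_ne hab) (injective_pair_of_ne hcd)
    (fun k k' => ?_) _ _
  fin_cases k <;> fin_cases k' <;> assumption

lemma commute_op2_opBlock (X : End2 N) {a b : Fin n} (hab : a ≠ b) {e : Fin p → Fin n}
    (he : Injective e) (ha : ∀ k, e k ≠ a) (hb : ∀ k, e k ≠ b) (Z : EndT N p) :
    Commute (op2 N n X a b) (opBlock N e Z) := by
  rw [op2_eq_opBlock X a b]
  refine commute_opBlock_of_disjoint (injective_pair_of_ne hab) he (fun k k' => ?_) _ _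
  fin_cases k
  exacts [(ha k').symm, (hb k').symm]

lemma op2_apply_comp (X : End2 N) (π : Equiv.Perm (Fin n)) (a b : Fin n) (f g : Fin n → Fin N) :
    op2 N n X a b (f ∘ π) (g ∘ π) = op2 N n X (π a) (π b) f g := by
  unfold op2
  congr 1
  refine (Finset.prod_congr rfl fun i _ => ?_).trans (Equiv.prod_comp π _)
  simp only [comp_apply, π.injective.ne_iff]

lemma permMat_mul_apply (π : Equiv.Perm (Fin n)) (M : EndT N n) (f h : Fin n → Fin N) :
    (permMat N n π * M) f h = M (f ∘ π.symm) h := by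
  simp only [Matrix.mul_apply, permMat, ← Equiv.comp_symm_eq, ite_mul, one_mul, zero_mul,
    Finset.sum_ite_eq, Finset.mem_univ, if_true]

lemma mul_permMat_apply (π : Equiv.Perm (Fin n)) (M : EndT N n) (f h : Fin n → Fin N) :
    (M * permMat N n π) f h = M f (h ∘ π) := by
  simp only [Matrix.mul_apply, permMat, mul_ite, mul_one, mul_zero, Finset.sum_ite_eq',
    Finset.mem_univ, if_true]

lemma op2_flipMat_eq_permMat (s t : Fin n) :
    op2 N n (flipMat N) s t = permMat N n (Equiv.swap s t) := by
  ext f g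
  rw [op2_apply]
  change (if f s = g t ∧ f t = g s then (1 : ℂ) else 0) * _ =
    if f = g ∘ Equiv.swap s t then 1 else 0
  rw [ite_zero_mul_ite_zero, one_mul]
  refine if_congr ⟨fun ⟨⟨hs, ht⟩, hout⟩ => funext fun i => ?_, ?_⟩ rfl rfl
  · rcases eq_or_ne i s with rfl | his
    · simpa using hs
    rcases eq_or_ne i t with rfl | hit
    · simpa using ht
    · simpa [Equiv.swap_apply_of_ne_of_ne his hit] using hout i his hit
  · rintro rfl
    exact ⟨by simp, fun i his hit => by simp [Equiv.swap_apply_of_ne_of_ne his hit]⟩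

lemma semiconjBy_op2_flipMat (s t : Fin n) (X : End2 N) (a b : Fin n) :
    SemiconjBy (op2 N n (flipMat N) s t) (op2 N n X a b)
      (op2 N n X (Equiv.swap s t a) (Equiv.swap s t b)) := by
  ext f h
  rw [op2_flipMat_eq_permMat, permMat_mul_apply, mul_permMat_apply,
    ← op2_apply_comp X (Equiv.swap s t)]
  congr 1
  funext i
  simp

variable {R : ℂ → End2 N}

lemma YangBaxter.at_factors (hR : YangBaxter N R) {a b c : Fin n} (hab : a ≠ b) (hac : a ≠ c)
    (hbc : b ≠ c) (u v : ℂ) :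
    op2 N n (R u) a b * op2 N n (R (u + v)) a c * op2 N n (R v) b c =
      op2 N n (R v) b c * op2 N n (R (u + v)) a c * op2 N n (R u) a b := by
  have he : Injective ![a, b, c] := by
    intro k k'
    fin_cases k <;> fin_cases k' <;> simp_all [eq_comm]
  have h := congrArg (opBlockHom (N := N) he) (hR u v)
  simp only [map_mul, opBlockHom_apply, opBlock_op2 he] at h
  simpa using h

def rowOp (N : ℕ) (R : ℂ → End2 N) {n : ℕ} (a : Fin n) (z : ℂ) (c : Fin n → ℂ)
    (l : List (Fin n)) : EndT N n :=
  (l.map fun j => op2 N n (R (z - c j)) a j).prod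

@[simp]
lemma rowOp_nil (a : Fin n) (z : ℂ) (c : Fin n → ℂ) : rowOp N R a z c [] = 1 := rfl

@[simp]
lemma rowOp_cons (a : Fin n) (z : ℂ) (c : Fin n → ℂ) (j : Fin n) (l : List (Fin n)) :
    rowOp N R a z c (j :: l) = op2 N n (R (z - c j)) a j * rowOp N R a z c l := rfl

@[simp]
lemma rowOp_append (a : Fin n) (z : ℂ) (c : Fin n → ℂ) (l₁ l₂ : List (Fin n)) :
    rowOp N R a z c (l₁ ++ l₂) = rowOp N R a z c l₁ * rowOp N R a z c l₂ := by
  simp [rowOp]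

lemma rowOp_congr (a : Fin n) (z : ℂ) {c c' : Fin n → ℂ} {l : List (Fin n)}
    (h : ∀ j ∈ l, c j = c' j) : rowOp N R a z c l = rowOp N R a z c' l :=
  congrArg List.prod (List.map_congr_left fun j hj => by rw [h j hj])

lemma opBlock_rowOp {e : Fin n → Fin m} (he : Injective e) (a : Fin n) (z : ℂ)
    (c : Fin m → ℂ) (l : List (Fin n)) :
    opBlock N e (rowOp N R a z (c ∘ e) l) = rowOp N R (e a) z c (l.map e) := by
  rw [rowOp, ← opBlockHom_apply he, map_list_prod, rowOp, List.map_map, List.map_map]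
  congr 2
  funext j
  simp [opBlock_op2 he]

lemma commute_op2_rowOp (X : End2 N) {s t a : Fin n} (hst : s ≠ t) (has : a ≠ s) (hat : a ≠ t)
    (z : ℂ) (c : Fin n → ℂ) {l : List (Fin n)} (hl : ∀ j ∈ l, j ≠ a ∧ j ≠ s ∧ j ≠ t) :
    Commute (op2 N n X s t) (rowOp N R a z c l) := by
  refine Commute.list_prod_right _ _ fun x hx => ?_
  obtain ⟨j, hj, rfl⟩ := List.mem_map.mp hx
  obtain ⟨hja, hjs, hjt⟩ := hl j hj
  exact commute_op2_op2 _ _ hst (Ne.symm hja) has.symm hjs.symm hat.symm hjt.symm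

lemma SemiconjBy.list_prod_map {M α : Type*} [Monoid M] {x : M} {f g : α → M} {l : List α}
    (h : ∀ j ∈ l, SemiconjBy x (f j) (g j)) :
    SemiconjBy x (l.map f).prod (l.map g).prod := by
  induction l with
  | nil => exact SemiconjBy.one_right x
  | cons j l ih =>
    simpa using (h j List.mem_cons_self).mul_right (ih fun k hk => h k (List.mem_cons_of_mem _ hk))

lemma semiconjBy_op2_flipMat_rowOp (s t a : Fin n) (z : ℂ) (c : Fin n → ℂ) {l : List (Fin n)}
    (hl : ∀ j ∈ l, j ≠ s ∧ j ≠ t) :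
    SemiconjBy (op2 N n (flipMat N) s t) (rowOp N R a z c l)
      (rowOp N R (Equiv.swap s t a) z c l) := by
  refine SemiconjBy.list_prod_map fun j hj => ?_
  have h := semiconjBy_op2_flipMat s t (R (z - c j)) a j
  rwa [Equiv.swap_apply_of_ne_of_ne (hl j hj).1 (hl j hj).2] at h

lemma YangBaxter.op2_mul_rowOp_mul_rowOp (hR : YangBaxter N R) {a b : Fin n} (hab : a ≠ b)
    (z z' : ℂ) (c : Fin n → ℂ) {l : List (Fin n)} (hl : l.Nodup)
    (hlab : ∀ j ∈ l, j ≠ a ∧ j ≠ b) :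
    op2 N n (R (z - z')) a b * rowOp N R a z c l * rowOp N R b z' c l =
      rowOp N R b z' c l * rowOp N R a z c l * op2 N n (R (z - z')) a b := by
  induction l with
  | nil => simp
  | cons j t ih =>
    obtain ⟨hjt, ht⟩ := List.nodup_cons.mp hl
    obtain ⟨hja, hjb⟩ := hlab j List.mem_cons_self
    have htab : ∀ k ∈ t, k ≠ a ∧ k ≠ b := fun k hk => hlab k (List.mem_cons_of_mem _ hk)
    have htj : ∀ k ∈ t, k ≠ j := fun k hk hkj => hjt (hkj ▸ hk)
    set Rab := op2 N n (R (z - z')) a b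
    set Aj := op2 N n (R (z - c j)) a j
    set Bj := op2 N n (R (z' - c j)) b j
    set A := rowOp N R a z c t
    set B := rowOp N R b z' c t
    have ybe : Rab * Aj * Bj = Bj * Aj * Rab := by
      simpa only [sub_add_sub_cancel] using
        hR.at_factors hab (Ne.symm hja) (Ne.symm hjb) (z - z') (z' - c j)
    have hBjA : Commute Bj A := commute_op2_rowOp _ (Ne.symm hjb) hab (Ne.symm hja) z c
      fun k hk => ⟨(htab k hk).1, (htab k hk).2, htj k hk⟩
    have hAjB : Commute Aj B := commute_op2_rowOp _ (Ne.symm hja) (Ne.symm hab) (Ne.symm hjb) z' c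
      fun k hk => ⟨(htab k hk).2, (htab k hk).1, htj k hk⟩
    simp only [rowOp_cons]
    calc Rab * (Aj * A) * (Bj * B)
        = Rab * Aj * (A * Bj) * B := by simp only [mul_assoc]
      _ = (Rab * Aj * Bj) * (A * B) := by rw [← hBjA.eq]; simp only [mul_assoc]
      _ = Bj * Aj * (Rab * A * B) := by rw [ybe]; simp only [mul_assoc]
      _ = Bj * (Aj * B) * (A * Rab) := by rw [ih ht htab]; simp only [mul_assoc]
      _ = Bj * B * (Aj * A) * Rab := by rw [hAjB.eq]; simp only [mul_assoc]

lemma YangBaxter.semiconjBy_checkR_pair (hR : YangBaxter N R) {o a b : Fin n} (hoa : o ≠ a)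
    (hob : o ≠ b) (hab : a ≠ b) (z : ℂ) (c : Fin n → ℂ) :
    SemiconjBy (op2 N n (flipMat N) a b * op2 N n (R (c b - c a)) b a)
      (op2 N n (R (z - c a)) o a * op2 N n (R (z - c b)) o b)
      (op2 N n (R (z - c b)) o a * op2 N n (R (z - c a)) o b) := by
  set P := op2 N n (flipMat N) a b
  set W := op2 N n (R (c b - c a)) b a
  have ybe : op2 N n (R (z - c b)) o b * op2 N n (R (z - c a)) o a * W =
      W * op2 N n (R (z - c a)) o a * op2 N n (R (z - c b)) o b := by
    simpa only [sub_add_sub_cancel] using hR.at_factors hob hoa (Ne.symm hab) (z - c b) (c b - c a)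
  have hflip : SemiconjBy P (op2 N n (R (z - c b)) o b * op2 N n (R (z - c a)) o a)
      (op2 N n (R (z - c b)) o a * op2 N n (R (z - c a)) o b) := by
    have h := (semiconjBy_op2_flipMat a b (R (z - c b)) o b).mul_right
      (semiconjBy_op2_flipMat a b (R (z - c a)) o a)
    rwa [Equiv.swap_apply_of_ne_of_ne hoa hob, Equiv.swap_apply_right,
      Equiv.swap_apply_left] at h
  calc P * W * (op2 N n (R (z - c a)) o a * op2 N n (R (z - c b)) o b)
      = P * (op2 N n (R (z - c b)) o b * op2 N n (R (z - c a)) o a) * W := by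
        rw [mul_assoc, ← mul_assoc W, ← ybe]; simp only [mul_assoc]
    _ = _ := by rw [hflip.eq]; simp only [mul_assoc]

lemma semiconjBy_checkR_rowOp_of_disjoint {o a b : Fin n} (hoa : o ≠ a) (hob : o ≠ b)
    (hab : a ≠ b) (z : ℂ) (c : Fin n → ℂ) {l : List (Fin n)}
    (hl : ∀ j ∈ l, j ≠ o ∧ j ≠ a ∧ j ≠ b) :
    SemiconjBy (op2 N n (flipMat N) a b * op2 N n (R (c b - c a)) b a)
      (rowOp N R o z c l) (rowOp N R o z (c ∘ Equiv.swap a b) l) := by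
  have hc : rowOp N R o z (c ∘ Equiv.swap a b) l = rowOp N R o z c l := rowOp_congr o z
    fun j hj => congrArg c (Equiv.swap_apply_of_ne_of_ne (hl j hj).2.1 (hl j hj).2.2)
  rw [hc]
  exact (commute_op2_rowOp _ hab hoa hob z c hl).mul_left
    (commute_op2_rowOp _ (Ne.symm hab) hob hoa z c
      fun j hj => ⟨(hl j hj).1, (hl j hj).2.2, (hl j hj).2.1⟩)

lemma YangBaxter.semiconjBy_checkR_rowOp (hR : YangBaxter N R) {o a b : Fin n} (hoa : o ≠ a)
    (hob : o ≠ b) (hab : a ≠ b) (z : ℂ) (c : Fin n → ℂ) {l₁ l₂ : List (Fin n)}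
    (hl : ∀ j ∈ l₁ ++ l₂, j ≠ o ∧ j ≠ a ∧ j ≠ b) :
    SemiconjBy (op2 N n (flipMat N) a b * op2 N n (R (c b - c a)) b a)
      (rowOp N R o z c (l₁ ++ a :: b :: l₂))
      (rowOp N R o z (c ∘ Equiv.swap a b) (l₁ ++ a :: b :: l₂)) := by
  have h₁ := semiconjBy_checkR_rowOp_of_disjoint (R := R) hoa hob hab z c
    fun j hj => hl j (List.mem_append_left _ hj)
  have h₂ := semiconjBy_checkR_rowOp_of_disjoint (R := R) hoa hob hab z c
    fun j hj => hl j (List.mem_append_right _ hj)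
  simp only [rowOp_append, rowOp_cons, ← mul_assoc (op2 _ _ _ o a), comp_apply,
    Equiv.swap_apply_left, Equiv.swap_apply_right]
  exact h₁.mul_right ((hR.semiconjBy_checkR_pair hoa hob hab z c).mul_right h₂)

lemma List.exists_finRange_eq_append_cons_cons (j : Fin m) :
    ∃ l₁ l₂, List.finRange (m + 1) = l₁ ++ j.castSucc :: j.succ :: l₂ := by
  refine ⟨(List.finRange (m + 1)).take j, (List.finRange (m + 1)).drop (j + 2), ?_⟩
  conv_lhs => rw [← List.take_append_drop j (List.finRange (m + 1))]
  rw [List.drop_eq_getElem_cons (by simp), List.drop_eq_getElem_cons (by simp)]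
  simp [Fin.ext_iff]

lemma List.Nodup.ne_of_mem_append_cons_cons {α : Type*} {l₁ l₂ : List α} {x y : α}
    (h : (l₁ ++ x :: y :: l₂).Nodup) {j : α} (hj : j ∈ l₁ ++ l₂) : j ≠ x ∧ j ≠ y := by
  have h' : (x :: y :: (l₁ ++ l₂)).Nodup :=
    (List.perm_middle.trans (List.Perm.cons x List.perm_middle)).nodup_iff.mp h
  simp only [List.nodup_cons, List.mem_cons, not_or] at h'
  exact ⟨fun hjx => h'.1.2 (hjx ▸ hj), fun hjy => h'.2.1 (hjy ▸ hj)⟩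

lemma YangBaxter.semiconjBy_checkR_firstRow (hR : YangBaxter N R) (c : Fin (m + 3) → ℂ)
    (j : Fin (m + 1)) :
    SemiconjBy (op2 N (m + 3) (flipMat N) j.castSucc.succ j.succ.succ *
        op2 N (m + 3) (R (c j.succ.succ - c j.castSucc.succ)) j.succ.succ j.castSucc.succ)
      (rowOp N R 0 (c 0) c ((List.finRange (m + 2)).map Fin.succ))
      (rowOp N R 0 (c 0) (c ∘ Equiv.swap j.castSucc.succ j.succ.succ)
        ((List.finRange (m + 2)).map Fin.succ)) := by
  obtain ⟨l₁, l₂, hsplit⟩ := List.exists_finRange_eq_append_cons_cons j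
  have hnd := (List.nodup_finRange (m + 2)).map (Fin.succ_injective (m + 2))
  rw [hsplit, List.map_append, List.map_cons, List.map_cons] at hnd ⊢
  refine hR.semiconjBy_checkR_rowOp (Fin.succ_ne_zero _).symm (Fin.succ_ne_zero _).symm
    ((Fin.succ_injective _).ne Fin.castSucc_lt_succ.ne) (c 0) c
    fun k hk => ⟨?_, hnd.ne_of_mem_append_cons_cons hk⟩
  simp only [List.mem_append, List.mem_map] at hk
  rcases hk with ⟨k, -, rfl⟩ | ⟨k, -, rfl⟩ <;> exact Fin.succ_ne_zero k

lemma lexPairs_succ (m : ℕ) :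
    lexPairs (m + 1) =
      (List.finRange m).map (fun j => ((0 : Fin (m + 1)), j.succ)) ++
        (lexPairs m).map (Prod.map Fin.succ Fin.succ) := by
  simp only [lexPairs, List.finRange_succ, List.flatMap_cons, List.filter_cons, List.filter_map,
    List.flatMap_map, List.map_flatMap, List.map_map]
  congr 1
  · simp [comp_def, Fin.succ_pos]
  · congr 1
    funext i
    simp [comp_def, Fin.succ_lt_succ_iff]

variable (R) in
lemma Fop_succ (c : Fin (m + 1) → ℂ) :
    Fop N R c = rowOp N R 0 (c 0) c ((List.finRange m).map Fin.succ) *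
      opBlock N Fin.succ (Fop N R (c ∘ Fin.succ)) := by
  rw [Fop, lexPairs_succ, List.map_append, List.prod_append, Fop,
    ← opBlockHom_apply (Fin.succ_injective m), map_list_prod]
  simp [rowOp, comp_def, opBlock_op2 (Fin.succ_injective m)]

variable (R) in
lemma Fop_succ_succ (c : Fin (m + 2) → ℂ) :
    Fop N R c = op2 N (m + 2) (R (c 0 - c 1)) 0 1 *
      rowOp N R 0 (c 0) c (((List.finRange m).map Fin.succ).map Fin.succ) *
      (rowOp N R 1 (c 1) c (((List.finRange m).map Fin.succ).map Fin.succ) *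
        opBlock N (Fin.succ ∘ Fin.succ) (Fop N R (c ∘ Fin.succ ∘ Fin.succ))) := by
  rw [Fop_succ, Fop_succ R (c ∘ Fin.succ), ← opBlockHom_apply (Fin.succ_injective _), map_mul,
    opBlockHom_apply, opBlockHom_apply, opBlock_rowOp (Fin.succ_injective _),
    opBlock_comp (Fin.succ_injective _), List.finRange_succ]
  simp [comp_def, mul_assoc]

lemma ne_zero_and_ne_one_of_mem_map_succ_succ {l : List (Fin m)} {j : Fin (m + 2)}
    (hj : j ∈ (l.map Fin.succ).map Fin.succ) : j ≠ 0 ∧ j ≠ 1 := by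
  simp only [List.map_map, List.mem_map, comp_apply] at hj
  obtain ⟨k, -, rfl⟩ := hj
  exact ⟨Fin.succ_ne_zero _, fun h => Fin.succ_ne_zero k (Fin.succ_injective _ h)⟩

variable (R) in
lemma Fop_comp_swap_zero_one (c : Fin (m + 2) → ℂ) :
    Fop N R (c ∘ Equiv.swap 0 1) = op2 N (m + 2) (R (c 1 - c 0)) 0 1 *
      rowOp N R 0 (c 1) c (((List.finRange m).map Fin.succ).map Fin.succ) *
      (rowOp N R 1 (c 0) c (((List.finRange m).map Fin.succ).map Fin.succ) *
        opBlock N (Fin.succ ∘ Fin.succ) (Fop N R (c ∘ Fin.succ ∘ Fin.succ))) := by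
  have hσ : ∀ j ∈ ((List.finRange m).map Fin.succ).map Fin.succ,
      (c ∘ Equiv.swap 0 1) j = c j := fun j hj =>
    congrArg c (Equiv.swap_apply_of_ne_of_ne (ne_zero_and_ne_one_of_mem_map_succ_succ hj).1
      (ne_zero_and_ne_one_of_mem_map_succ_succ hj).2)
  have hσ' : c ∘ Equiv.swap 0 1 ∘ Fin.succ ∘ Fin.succ = c ∘ Fin.succ ∘ Fin.succ := by
    funext j
    simp [Equiv.swap_apply_of_ne_of_ne, Fin.ext_iff]
  rw [Fop_succ_succ, comp_apply, comp_apply, Equiv.swap_apply_left, Equiv.swap_apply_right,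
    comp_assoc, hσ', rowOp_congr 0 _ hσ, rowOp_congr 1 _ hσ]

lemma YangBaxter.checkR_mul_Fop_zero (hR : YangBaxter N R) (c : Fin (m + 2) → ℂ) :
    op2 N (m + 2) (flipMat N) 0 1 * op2 N (m + 2) (R (c 1 - c 0)) 1 0 * Fop N R c =
      Fop N R (c ∘ Equiv.swap 0 1) *
        (op2 N (m + 2) (flipMat N) 0 1 * op2 N (m + 2) (R (c 0 - c 1)) 0 1) := by
  rw [Fop_succ_succ, Fop_comp_swap_zero_one]
  set L := ((List.finRange m).map Fin.succ).map (Fin.succ : Fin (m + 1) → Fin (m + 2))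
  set D := opBlock N (Fin.succ ∘ Fin.succ) (Fop N R (c ∘ Fin.succ ∘ Fin.succ))
  have hL : ∀ j ∈ L, j ≠ 0 ∧ j ≠ 1 := fun j hj => ne_zero_and_ne_one_of_mem_map_succ_succ hj
  have hinj : Injective (Fin.succ ∘ Fin.succ : Fin m → Fin (m + 2)) :=
    (Fin.succ_injective _).comp (Fin.succ_injective _)
  have h01 := semiconjBy_op2_flipMat (0 : Fin (m + 2)) 1 (R (c 0 - c 1)) 0 1
  have h10 := semiconjBy_op2_flipMat (0 : Fin (m + 2)) 1 (R (c 1 - c 0)) 1 0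
  have hA := semiconjBy_op2_flipMat_rowOp (R := R) 0 1 0 (c 0) c hL
  have hB := semiconjBy_op2_flipMat_rowOp (R := R) 0 1 1 (c 1) c hL
  simp only [Equiv.swap_apply_left, Equiv.swap_apply_right] at h01 h10 hA hB
  have hD : Commute (op2 N (m + 2) (flipMat N) 0 1) D :=
    commute_op2_opBlock _ zero_ne_one hinj (fun k => by simp) (fun k => by simp [Fin.ext_iff]) _
  have hD' : Commute (op2 N (m + 2) (R (c 0 - c 1)) 1 0) D :=
    commute_op2_opBlock _ one_ne_zero hinj (fun k => by simp [Fin.ext_iff]) (fun k => by simp) _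
  have hL' : L.Nodup :=
    ((List.nodup_finRange m).map (Fin.succ_injective _)).map (Fin.succ_injective _)
  have train := hR.op2_mul_rowOp_mul_rowOp one_ne_zero (c 0) (c 1) c hL' fun j hj => (hL j hj).symm
  have hall := (h01.mul_right hA).mul_right (hB.mul_right hD)
  set P := op2 N (m + 2) (flipMat N) 0 1
  set W := op2 N (m + 2) (R (c 0 - c 1)) 1 0
  calc P * op2 N (m + 2) (R (c 1 - c 0)) 1 0 *
        (op2 N (m + 2) (R (c 0 - c 1)) 0 1 * rowOp N R 0 (c 0) c L * (rowOp N R 1 (c 1) c L * D))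
      = op2 N (m + 2) (R (c 1 - c 0)) 0 1 *
          (W * rowOp N R 1 (c 0) c L * rowOp N R 0 (c 1) c L * D * P) := by
        rw [h10.eq, mul_assoc, hall.eq]; simp only [mul_assoc]
    _ = op2 N (m + 2) (R (c 1 - c 0)) 0 1 *
          (rowOp N R 0 (c 1) c L * rowOp N R 1 (c 0) c L * (W * D) * P) := by
        rw [train]; simp only [mul_assoc]
    _ = op2 N (m + 2) (R (c 1 - c 0)) 0 1 * rowOp N R 0 (c 1) c L *
          (rowOp N R 1 (c 0) c L * D) * (P * op2 N (m + 2) (R (c 0 - c 1)) 0 1) := by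
        rw [hD'.eq, h01.eq]; simp only [mul_assoc]

lemma YangBaxter.checkR_mul_Fop (hR : YangBaxter N R) (c : Fin (m + 2) → ℂ) (i : Fin (m + 1)) :
    op2 N (m + 2) (flipMat N) i.castSucc i.succ *
        op2 N (m + 2) (R (c i.succ - c i.castSucc)) i.succ i.castSucc * Fop N R c =
      Fop N R (c ∘ Equiv.swap i.castSucc i.succ) *
        (op2 N (m + 2) (flipMat N) i.castSucc i.succ *
          op2 N (m + 2) (R (c i.castSucc - c i.succ)) i.castSucc i.succ) := by
  induction m with
  | zero =>
    obtain rfl := Fin.fin_one_eq_zero i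
    exact hR.checkR_mul_Fop_zero c
  | succ m ih =>
    induction i using Fin.cases with
    | zero => exact hR.checkR_mul_Fop_zero c
    | succ j =>
      set a : Fin (m + 3) := j.castSucc.succ
      set b : Fin (m + 3) := j.succ.succ
      set T := op2 N (m + 3) (flipMat N) a b * op2 N (m + 3) (R (c b - c a)) b a
      have hblock : T * opBlock N Fin.succ (Fop N R (c ∘ Fin.succ)) =
          opBlock N Fin.succ (Fop N R (c ∘ Equiv.swap a b ∘ Fin.succ)) *
            (op2 N (m + 3) (flipMat N) a b * op2 N (m + 3) (R (c a - c b)) a b) := by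
        have h := congrArg (opBlockHom (Fin.succ_injective _)) (ih (c ∘ Fin.succ) j)
        simp only [map_mul, opBlockHom_apply, opBlock_op2 (Fin.succ_injective _)] at h
        have hc : (c ∘ Fin.succ) ∘ Equiv.swap j.castSucc j.succ =
            c ∘ Equiv.swap a b ∘ Fin.succ := by
          funext k
          simp [a, b, (Fin.succ_injective _).swap_apply]
        rwa [hc] at h
      show T * Fop N R c = Fop N R (c ∘ Equiv.swap a b) * _
      rw [Fop_succ R c, Fop_succ R (c ∘ Equiv.swap a b), comp_apply,
        Equiv.swap_apply_of_ne_of_ne (Fin.succ_ne_zero _).symm (Fin.succ_ne_zero _).symm,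
        ← mul_assoc, (hR.semiconjBy_checkR_firstRow c j).eq, mul_assoc, hblock, ← mul_assoc]
      rfl

end YangBaxterIntertwining

/-- On `V^{⊗n}`:
`P_{k,k+1} R_{k+1,k}(c_{k+1}−c_k) · F(c) = F(c^{(s_k)}) · P_{k,k+1} R_{k,k+1}(c_k−c_{k+1})`,
where `c^{(s_k)}` is obtained from `c` by exchanging `c_k` and `c_{k+1}`. -/
theorem Fop_swap_intertwining
    (N : ℕ) (R : ℂ → End2 N) (hR : YangBaxter N R)
    (n : ℕ) (c : Fin n → ℂ)
    (k : ℕ) (hk : k + 1 < n) :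
    op2 N n (flipMat N) ⟨k, by omega⟩ ⟨k + 1, hk⟩ *
      op2 N n (R (c ⟨k + 1, hk⟩ - c ⟨k, by omega⟩)) ⟨k + 1, hk⟩ ⟨k, by omega⟩ *
      Fop N R c =
    Fop N R (c ∘ Equiv.swap ⟨k, by omega⟩ ⟨k + 1, hk⟩) *
      (op2 N n (flipMat N) ⟨k, by omega⟩ ⟨k + 1, hk⟩ *
      op2 N n (R (c ⟨k, by omega⟩ - c ⟨k + 1, hk⟩)) ⟨k, by omega⟩ ⟨k + 1, hk⟩) := by
  obtain ⟨m, rfl⟩ : ∃ m, n = m + 2 := ⟨n - 2, by omega⟩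
  exact hR.checkR_mul_Fop c ⟨k, by omega⟩
end

section
/- Let n ≥ 3 and let i, j, k be pairwise distinct elements of {1,…,n}. Then in the group algebra ℂS_n, for all u, v ∈ ℂ with u ≠ 0, v ≠ 0 and u+v ≠ 0: (1 − (i,j)/u)(1 − (i,k)/(u+v))(1 − (j,k)/v) = (1 − (j,k)/v)(1 − (i,k)/(u+v))(1 − (i,j)/u). -/
/-!
Clearing denominators, it suffices to show that `R_x(u) = u - x` satisfies
`R_s(u) R_t(u + v) R_r(v) = R_r(v) R_t(u + v) R_s(u)` for `s = (i,j)`, `t = (i,k)`, `r = (j,k)`.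
Expanding both sides, the difference is `u ([t,r] + [s,r]) + v ([s,r] + [s,t]) - (s t r - r t s)`,
and every term vanishes because `s t`, `t r`, `r s` are one 3-cycle and `t s`, `r t`, `s r` its
inverse.
-/

theorem Equiv.swap_mul_swap_eq_swap_mul_swap {α : Type*} [DecidableEq α] {a b c : α}
    (hab : a ≠ b) (hbc : b ≠ c) :
    swap a b * swap a c = swap a c * swap b c := by
  rw [swap_comm b c, ← swap_mul_swap_mul_swap hab.symm hbc, swap_comm b a]
  simp only [← mul_assoc, swap_mul_self, one_mul]

section

variable {A : Type*} [Ring A] {s t r : A}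

theorem yangBaxter_smul_one_sub {k : Type*} [CommRing k] [Algebra k A]
    (hst : s * t = t * r) (htr : t * r = r * s) (hts : t * s = r * t) (hrt : r * t = s * r)
    (u v : k) :
    (u • 1 - s) * ((u + v) • 1 - t) * (v • 1 - r) =
      (v • 1 - r) * ((u + v) • 1 - t) * (u • 1 - s) := by
  have hstr : s * t * r = r * t * s := by
    rw [hst, htr, mul_assoc, mul_assoc, hts, hrt]
  simp only [mul_sub, sub_mul, smul_mul_assoc, mul_smul_comm, one_mul, mul_one]
  rw [hstr]
  simp only [hst, htr, hts, hrt]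
  module

variable {K : Type*} [Field K] [Algebra K A]

theorem one_sub_inv_smul {u : K} (hu : u ≠ 0) (x : A) : 1 - u⁻¹ • x = u⁻¹ • (u • 1 - x) := by
  rw [smul_sub, smul_smul, inv_mul_cancel₀ hu, one_smul]

theorem yangBaxter_one_sub_inv_smul
    (hst : s * t = t * r) (htr : t * r = r * s) (hts : t * s = r * t) (hrt : r * t = s * r)
    {u v : K} (hu : u ≠ 0) (hv : v ≠ 0) (huv : u + v ≠ 0) :
    (1 - u⁻¹ • s) * (1 - (u + v)⁻¹ • t) * (1 - v⁻¹ • r) =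
      (1 - v⁻¹ • r) * (1 - (u + v)⁻¹ • t) * (1 - u⁻¹ • s) := by
  simp only [one_sub_inv_smul hu, one_sub_inv_smul hv, one_sub_inv_smul huv,
    smul_mul_smul_comm, yangBaxter_smul_one_sub hst htr hts hrt]
  congr 1
  ring

end

theorem baxterized_yang_baxter_general
    (n : ℕ) (i j k : Fin n)
    (hij : i ≠ j) (hik : i ≠ k) (hjk : j ≠ k)
    (u v : ℂ) (hu : u ≠ 0) (hv : v ≠ 0) (huv : u + v ≠ 0) :
    ((1 : MonoidAlgebra ℂ (Equiv.Perm (Fin n))) -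
        u⁻¹ • MonoidAlgebra.of ℂ (Equiv.Perm (Fin n)) (Equiv.swap i j)) *
      (1 - (u + v)⁻¹ • MonoidAlgebra.of ℂ (Equiv.Perm (Fin n)) (Equiv.swap i k)) *
      (1 - v⁻¹ • MonoidAlgebra.of ℂ (Equiv.Perm (Fin n)) (Equiv.swap j k)) =
    (1 - v⁻¹ • MonoidAlgebra.of ℂ (Equiv.Perm (Fin n)) (Equiv.swap j k)) *
      (1 - (u + v)⁻¹ • MonoidAlgebra.of ℂ (Equiv.Perm (Fin n)) (Equiv.swap i k)) *
      (1 - u⁻¹ • MonoidAlgebra.of ℂ (Equiv.Perm (Fin n)) (Equiv.swap i j)) := by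
  have swap_rel {a b c : Fin n} (hab : a ≠ b) (hbc : b ≠ c) :
      MonoidAlgebra.of ℂ _ (Equiv.swap a b) * MonoidAlgebra.of ℂ _ (Equiv.swap a c) =
        MonoidAlgebra.of ℂ _ (Equiv.swap a c) * MonoidAlgebra.of ℂ _ (Equiv.swap b c) := by
    rw [← map_mul, ← map_mul, Equiv.swap_mul_swap_eq_swap_mul_swap hab hbc]
  apply yangBaxter_one_sub_inv_smul _ _ _ _ hu hv huv
  · exact swap_rel hij hjk
  · simpa only [Equiv.swap_comm] using swap_rel hik.symm hij
  · simpa only [Equiv.swap_comm] using (swap_rel hjk.symm hij.symm).symm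
  · simpa only [Equiv.swap_comm] using (swap_rel hij.symm hik).symm

/-- Yang--Baxter relation for the Baxterized elements of the group
algebra `ℂS_n`: for pairwise distinct `i, j, k` and `u, v, u+v ≠ 0`,
`(1 − (i,j)/u)(1 − (i,k)/(u+v))(1 − (j,k)/v) = (1 − (j,k)/v)(1 − (i,k)/(u+v))(1 − (i,j)/u)`. -/
theorem baxterized_yang_baxter
    (n : ℕ) (hn : 3 ≤ n) (i j k : Fin n)
    (hij : i ≠ j) (hik : i ≠ k) (hjk : j ≠ k)
    (u v : ℂ) (hu : u ≠ 0) (hv : v ≠ 0) (huv : u + v ≠ 0) :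
    ((1 : MonoidAlgebra ℂ (Equiv.Perm (Fin n))) -
        u⁻¹ • MonoidAlgebra.of ℂ (Equiv.Perm (Fin n)) (Equiv.swap i j)) *
      (1 - (u + v)⁻¹ • MonoidAlgebra.of ℂ (Equiv.Perm (Fin n)) (Equiv.swap i k)) *
      (1 - v⁻¹ • MonoidAlgebra.of ℂ (Equiv.Perm (Fin n)) (Equiv.swap j k)) =
    (1 - v⁻¹ • MonoidAlgebra.of ℂ (Equiv.Perm (Fin n)) (Equiv.swap j k)) *
      (1 - (u + v)⁻¹ • MonoidAlgebra.of ℂ (Equiv.Perm (Fin n)) (Equiv.swap i k)) *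
      (1 - u⁻¹ • MonoidAlgebra.of ℂ (Equiv.Perm (Fin n)) (Equiv.swap i j)) :=
  baxterized_yang_baxter_general n i j k hij hik hjk u v hu hv huv
end

section
/- Let n ≥ 2 and let u_1, …, u_n ∈ ℂ be pairwise distinct. Then in ℂS_n: ∏_{i=1,…,n−1}^{→} [ (s_i − 1/(u_1−u_{i+1})) (s_{i−1} − 1/(u_2−u_{i+1})) ⋯ (s_2 − 1/(u_{i−1}−u_{i+1})) (s_1 − 1/(u_i−u_{i+1})) ] = [ ∏_{1≤i<j≤n}^{→} (1 − (i,j)/(u_i−u_j)) ] · w_n, where the outer product on the left is taken with i increasing from 1 to n−1 (and inside the i-th group the j-th factor, j = 1,…,i, is (s_{i+1−j} − 1/(u_j−u_{i+1}))), the product on the right is over pairs i < j in lexicographic order, s_a := (a,a+1), and w_n is the longest element of S_n (w_n(i) = n−i+1). -/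
/-!
For an involution `σ` and any permutation `g`, `g (σ - c) = (1 - c • g σ g⁻¹) (g σ)` in the
group algebra. Pushing the accumulated permutation from left to right through the brackets, the
`i`-th bracket turns into `∏_{j ≤ i} (1 - c_j (j, i+1))`, while the accumulated permutation
passes from the reversal of `0, …, i` to the reversal of `0, …, i+1`; after the last bracket it
is `w_n`. The transposition factors so obtained come column by column; reordering them
lexicographically only ever exchanges factors `(i, k)` and `(p, j)` with `i < p < j < k`, whose
transpositions are disjoint and hence commute.
-/

noncomputable section

open Equiv List

section ListProd

variable {M : Type*} [Monoid M]

theorem List.prod_map_mul_of_pairwise_commute {ι : Type*} (a b : ι → M) (l : List ι)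
    (h : l.Pairwise fun i p => Commute (b i) (a p)) :
    (l.map fun i => a i * b i).prod = (l.map a).prod * (l.map b).prod := by
  induction l with
  | nil => simp
  | cons i t ih =>
    rw [pairwise_cons] at h
    have hb : Commute (b i) (t.map a).prod :=
      Commute.list_prod_right _ _ fun x hx => by
        obtain ⟨p, hp, rfl⟩ := mem_map.mp hx
        exact h.1 p hp
    simp only [map_cons, prod_cons, ih h.2]
    rw [mul_assoc, ← mul_assoc (b i), hb.eq, mul_assoc, mul_assoc]

theorem List.prod_map_prod_flatMap {α β : Type*} (l : List α) (f : α → List β)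
    (F : β → M) :
    ((l.flatMap f).map F).prod = (l.map fun a => ((f a).map F).prod).prod := by
  rw [map_flatMap, flatMap_def, prod_flatten, map_map]
  rfl

theorem List.map_finRange_eq_map_range {β : Type*} {m : ℕ} (f : Fin m → β) (g : ℕ → β)
    (h : ∀ i : Fin m, f i = g i) : (finRange m).map f = (range m).map g := by
  rw [← map_coe_finRange_eq_range, map_map]
  exact map_congr_left fun i _ => h i

theorem List.map_filter_finRange_eq_map_filter_range {β : Type*} {m : ℕ} (p : Fin m → Bool)
    (q : ℕ → Bool) (f : Fin m → β) (g : ℕ → β) (hp : ∀ i : Fin m, p i = q i)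
    (hf : ∀ i : Fin m, f i = g i) :
    ((finRange m).filter p).map f = ((range m).filter q).map g := by
  rw [← map_coe_finRange_eq_range, filter_map, map_map, filter_congr fun i _ => hp i]
  exact map_congr_left fun i _ => hf i

/-- A strictly upper triangular array read column by column or row by row gives the same product
when each entry commutes with the entries nested inside it. -/
theorem prod_columns_eq_prod_rows (F : ℕ → ℕ → M)
    (hF : ∀ i p j k, i < p → p < j → j < k → Commute (F i k) (F p j)) (N : ℕ) :
    ((range N).map fun k => ((range k).map fun j => F j k).prod).prod =
      ((range N).map fun i =>
        (((range N).filter fun j => decide (i < j)).map fun j => F i j).prod).prod := by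
  induction N with
  | zero => rfl
  | succ N ih =>
    have hrow : ∀ i ∈ range N, (((range (N + 1)).filter fun j => decide (i < j)).map
        fun j => F i j).prod =
        (((range N).filter fun j => decide (i < j)).map fun j => F i j).prod * F i N := by
      intro i hi
      simp [range_succ, filter_append, mem_range.mp hi]
    have hlast : ((range (N + 1)).filter fun j => decide (N < j)) = [] :=
      filter_eq_nil_iff.mpr fun j hj => by simpa using mem_range.mp hj
    rw [prod_range_succ, ih, prod_range_succ, hlast, map_nil, prod_nil, mul_one,
      map_congr_left hrow, prod_map_mul_of_pairwise_commute]
    refine pairwise_lt_range.imp_of_mem fun {i p} _ hp hip => ?_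
    refine Commute.list_prod_right _ _ fun x hx => ?_
    obtain ⟨j, hj, rfl⟩ := mem_map.mp hx
    simp only [mem_filter, mem_range, decide_eq_true_eq] at hj
    exact hF i p j N hip hj.2 hj.1

end ListProd

namespace MonoidAlgebra

variable {k G : Type*} [CommRing k] [Group G]

theorem of_mul_of_sub_smul_one {σ : G} (hσ : σ * σ = 1) (g : G) (c : k) :
    of k G g * (of k G σ - c • 1) = (1 - c • of k G (g * σ * g⁻¹)) * of k G (g * σ) := by
  have hg : g * σ * g⁻¹ * (g * σ) = g := by
    simp [mul_assoc, hσ]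
  rw [mul_sub, sub_mul, one_mul, smul_mul_assoc, ← map_mul, ← map_mul, hg, mul_smul_comm,
    mul_one]

theorem of_mul_prod_of_sub_smul_one (σ g : ℕ → G) (c : ℕ → k) (N : ℕ)
    (hσ : ∀ m < N, σ m * σ m = 1) (hg : ∀ m < N, g (m + 1) = g m * σ m) :
    of k G (g 0) * ((range N).map fun m => of k G (σ m) - c m • 1).prod =
      ((range N).map fun m => 1 - c m • of k G (g m * σ m * (g m)⁻¹)).prod *
        of k G (g N) := by
  induction N with
  | zero => simp
  | succ N ih =>
    rw [prod_range_succ, prod_range_succ, ← mul_assoc,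
      ih (fun m hm => hσ m (by omega)) (fun m hm => hg m (by omega)), mul_assoc,
      of_mul_of_sub_smul_one (hσ N N.lt_succ_self), ← hg N N.lt_succ_self, mul_assoc]

theorem commute_one_sub_smul {x y : MonoidAlgebra k G} (h : Commute x y) (a b : k) :
    Commute (1 - a • x) (1 - b • y) :=
  (Commute.one_right _).sub_right
    (((Commute.one_left y).sub_left (h.smul_left a)).smul_right b)

end MonoidAlgebra

namespace FusionFunction

/-- The transposition `(a b)` of `Fin n`, read as `1` when `a` or `b` is out of range. -/
def swapNat (n a b : ℕ) : Perm (Fin n) :=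
  if h : a < n ∧ b < n then swap ⟨a, h.1⟩ ⟨b, h.2⟩ else 1

/-- Reverses `0, …, i`; the identity when `n ≤ i`. -/
def revPrefix (n i : ℕ) : Perm (Fin n) :=
  Function.Involutive.toPerm
    (fun x => if h : x.val ≤ i ∧ i < n then ⟨i - x.val, by omega⟩ else x)
    fun x => by
      apply Fin.ext
      by_cases h : x.val ≤ i ∧ i < n <;> simp [h]
      omega

/-- `s_i s_{i-1} ⋯ s_{i-m+1}`, where indices start at `0`: `s_a = (a, a+1)` on `Fin n`. -/
def rowPrefix (n i m : ℕ) : Perm (Fin n) :=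
  ((range m).map fun l => swapNat n (i - l) (i - l + 1)).prod

variable {n : ℕ}

theorem swapNat_of_lt {a b : ℕ} (ha : a < n) (hb : b < n) :
    swapNat n a b = swap ⟨a, ha⟩ ⟨b, hb⟩ :=
  dif_pos ⟨ha, hb⟩

theorem swapNat_mul_self (a b : ℕ) : swapNat n a b * swapNat n a b = 1 := by
  unfold swapNat
  split_ifs
  · exact swap_mul_self _ _
  · exact mul_one 1

theorem swapNat_commute {a b c d : ℕ} (h : [a, b, c, d].Nodup) :
    Commute (swapNat n a b) (swapNat n c d) := by
  unfold swapNat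
  split_ifs
  · refine (Perm.disjoint_swap_swap ?_).commute
    simpa [Fin.ext_iff] using h
  all_goals simp

theorem revPrefix_apply_val {i : ℕ} (hi : i < n) (x : Fin n) :
    (revPrefix n i x).val = if x.val ≤ i then i - x.val else x.val := by
  by_cases h : x.val ≤ i <;> simp [revPrefix, h, hi]

theorem revPrefix_zero : revPrefix n 0 = 1 :=
  Perm.ext fun x => Fin.ext <| by
    rw [revPrefix_apply_val x.pos, Perm.one_apply]
    split_ifs <;> omega

theorem revPrefix_sub_one : revPrefix n (n - 1) = Fin.revPerm :=
  Perm.ext fun x => Fin.ext <| by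
    rw [revPrefix_apply_val (Nat.sub_one_lt_of_lt x.2), if_pos (Nat.le_sub_one_of_lt x.2),
      Fin.revPerm_apply, Fin.val_rev]
    omega

theorem rowPrefix_apply_val {i m : ℕ} (hi : i + 1 < n) (hm : m ≤ i + 1) (x : Fin n) :
    (rowPrefix n i m x).val =
      if x.val = i + 1 - m then i + 1
      else if i + 1 - m < x.val ∧ x.val ≤ i + 1 then x.val - 1 else x.val := by
  induction m generalizing x with
  | zero =>
    simp only [rowPrefix, range_zero, map_nil, prod_nil, Perm.one_apply]
    split_ifs <;> omega
  | succ m ih =>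
    rw [rowPrefix, prod_range_succ, ← rowPrefix, Perm.mul_apply, ih (by omega),
      swapNat_of_lt (by omega) (by omega)]
    simp only [swap_apply_def, Fin.ext_iff, apply_ite Fin.val]
    split_ifs <;> omega

theorem revPrefix_mul_rowPrefix_self {i : ℕ} (hi : i + 1 < n) :
    revPrefix n i * rowPrefix n i (i + 1) = revPrefix n (i + 1) :=
  Perm.ext fun x => Fin.ext <| by
    rw [Perm.mul_apply, revPrefix_apply_val (by omega), rowPrefix_apply_val hi le_rfl,
      revPrefix_apply_val hi]
    split_ifs <;> omega

theorem conj_swapNat_row {i m : ℕ} (hi : i + 1 < n) (hm : m ≤ i) :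
    revPrefix n i * rowPrefix n i m * swapNat n (i - m) (i - m + 1) *
      (revPrefix n i * rowPrefix n i m)⁻¹ = swapNat n m (i + 1) := by
  rw [swapNat_of_lt (by omega) (by omega), swapNat_of_lt (by omega) hi, ← swap_apply_apply]
  congr 1 <;> apply Fin.ext <;>
    rw [Perm.mul_apply, revPrefix_apply_val (by omega), rowPrefix_apply_val hi (by omega)] <;>
    dsimp only <;>
    split_ifs <;> omega

variable (k : Type*) [CommRing k] (d : ℕ → ℕ → k) (n : ℕ)

local notation "of'" => MonoidAlgebra.of k (Perm (Fin n))

/-- The `i`-th bracket `(s_i - d 0 (i+1)) (s_{i-1} - d 1 (i+1)) ⋯ (s_0 - d i (i+1))`. -/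
def simpleRow (i : ℕ) : MonoidAlgebra k (Perm (Fin n)) :=
  ((range (i + 1)).map fun m => of' (swapNat n (i - m) (i - m + 1)) - d m (i + 1) • 1).prod

def transFactor (i j : ℕ) : MonoidAlgebra k (Perm (Fin n)) :=
  1 - d i j • of' (swapNat n i j)

def transColumn (j : ℕ) : MonoidAlgebra k (Perm (Fin n)) :=
  ((range j).map fun i => transFactor k d n i j).prod

variable {n}

theorem of_revPrefix_mul_simpleRow {i : ℕ} (hi : i + 1 < n) :
    of' (revPrefix n i) * simpleRow k d n i =
      transColumn k d n (i + 1) * of' (revPrefix n (i + 1)) := by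
  have h := MonoidAlgebra.of_mul_prod_of_sub_smul_one (fun m => swapNat n (i - m) (i - m + 1))
    (fun m => revPrefix n i * rowPrefix n i m) (fun m => d m (i + 1)) (i + 1)
    (fun m _ => swapNat_mul_self _ _) (fun m _ => by
      simp only [rowPrefix, prod_range_succ, mul_assoc])
  simp only [rowPrefix, range_zero, map_nil, prod_nil, mul_one] at h
  rw [simpleRow, h, ← rowPrefix, revPrefix_mul_rowPrefix_self hi, transColumn]
  congr 2
  refine map_congr_left fun m hm => ?_
  rw [← rowPrefix, conj_swapNat_row hi (by simpa [Nat.lt_succ_iff] using hm), transFactor]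

theorem prod_simpleRow_eq_prod_transColumn_mul {I : ℕ} (hI : I ≤ n - 1) :
    ((range I).map (simpleRow k d n)).prod =
      ((range I).map fun i => transColumn k d n (i + 1)).prod * of' (revPrefix n I) := by
  induction I with
  | zero =>
    rw [revPrefix_zero, map_one, range_zero, map_nil, map_nil, prod_nil, mul_one]
  | succ I ih =>
    rw [prod_range_succ, prod_range_succ, ih (by omega), mul_assoc,
      of_revPrefix_mul_simpleRow k d (by omega), mul_assoc]

theorem prod_simpleRow_eq_prod_transFactor_mul_revPerm :
    ((range (n - 1)).map (simpleRow k d n)).prod =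
      ((range n).map fun i =>
        (((range n).filter fun j => decide (i < j)).map (transFactor k d n i)).prod).prod *
        of' Fin.revPerm := by
  have hshift : ((range (n - 1)).map fun i => transColumn k d n (i + 1)).prod =
      ((range n).map (transColumn k d n)).prod := by
    cases n with
    | zero => rfl
    | succ n => simp [range_succ_eq_map, map_map, Function.comp_def, transColumn]
  rw [prod_simpleRow_eq_prod_transColumn_mul k d le_rfl, revPrefix_sub_one, hshift]
  unfold transColumn
  rw [prod_columns_eq_prod_rows]
  intro i p j l hip hpj hjl
  refine MonoidAlgebra.commute_one_sub_smul ?_ _ _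
  refine (swapNat_commute ?_).map (MonoidAlgebra.of k (Perm (Fin n)))
  simp
  omega

end FusionFunction

open FusionFunction

/-- The fusion function of the symmetric group: in `ℂS_n`,
`∏→_{i=1..n−1} [ (s_i − 1/(u_1−u_{i+1})) ⋯ (s_1 − 1/(u_i−u_{i+1})) ]
  = [ ∏→_{1≤i<j≤n} (1 − (i,j)/(u_i−u_j)) ] · w_n`,
where `s_a = (a,a+1)` and `w_n` is the longest element of `S_n`. -/
theorem fusion_function_formula
    (n : ℕ) (u : Fin n → ℂ) :
    ((List.finRange (n - 1)).map fun i =>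
      ((List.finRange (i.val + 1)).map fun j =>
        MonoidAlgebra.of ℂ (Equiv.Perm (Fin n))
            (Equiv.swap ⟨i.val - j.val, by have := i.isLt; omega⟩
                        ⟨i.val - j.val + 1, by have := i.isLt; omega⟩) -
          (u ⟨j.val, by have := i.isLt; have := j.isLt; omega⟩ -
            u ⟨i.val + 1, by have := i.isLt; omega⟩)⁻¹ •
            (1 : MonoidAlgebra ℂ (Equiv.Perm (Fin n)))).prod).prod =
    ((lexPairs n).map fun p =>
      (1 : MonoidAlgebra ℂ (Equiv.Perm (Fin n))) -
        (u p.1 - u p.2)⁻¹ •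
          MonoidAlgebra.of ℂ (Equiv.Perm (Fin n)) (Equiv.swap p.1 p.2)).prod *
      MonoidAlgebra.of ℂ (Equiv.Perm (Fin n)) Fin.revPerm := by
  let d : ℕ → ℕ → ℂ := fun a b =>
    if h : a < n ∧ b < n then (u ⟨a, h.1⟩ - u ⟨b, h.2⟩)⁻¹ else 0
  have hd (a b : Fin n) : d a b = (u a - u b)⁻¹ := dif_pos ⟨a.2, b.2⟩
  calc _ = ((range (n - 1)).map (simpleRow ℂ d n)).prod := by
        refine congrArg prod (map_finRange_eq_map_range _ _ fun i => ?_)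
        refine congrArg prod (map_finRange_eq_map_range _ _ fun j => ?_)
        rw [swapNat_of_lt (by omega) (by omega), hd ⟨j, by omega⟩ ⟨i + 1, by omega⟩]
    _ = _ := prod_simpleRow_eq_prod_transFactor_mul_revPerm ℂ d
    _ = _ := by
        rw [lexPairs, prod_map_prod_flatMap]
        refine congrArg (prod · * _) (map_finRange_eq_map_range _ _ fun i => ?_).symm
        rw [map_map]
        refine congrArg prod (map_filter_finRange_eq_map_filter_range _ _ _ _
          (fun j => rfl) fun j => ?_)
        rw [Function.comp_apply, transFactor, swapNat_of_lt i.2 j.2, hd]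

end
end

section
/- Let V_0 and V_1 be finite-dimensional complex vector spaces, V := V_0 ⊕ V_1, and let Ĩ ∈ End(V⊗V) be the operator acting on x⊗y, with x ∈ V_a and y ∈ V_b (a, b ∈ {0,1}), as multiplication by (−1)^{ab}. Define R(u) := Ĩ − P/u for u ≠ 0, where P is the flip of V⊗V. Then: (1) for all u, v ∈ ℂ with u ≠ 0, v ≠ 0, u+v ≠ 0, the Yang–Baxter equation R_{1,2}(u) R_{1,3}(u+v) R_{2,3}(v) = R_{2,3}(v) R_{1,3}(u+v) R_{1,2}(u) holds on V⊗V⊗V; and (2) for all u ∈ ℂ with u ≠ 0, the unitarity condition R(u) · P R(−u) P = ((u²−1)/u²) · Id_{V⊗V} holds. -/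
/-!
On a pure tensor of homogeneous vectors, `Ĩ` multiplies by a sign that depends only on the
unordered pair of factors, while `P` permutes the factors. Both sides of the Yang–Baxter and
unitarity identities therefore map a pure tensor `x ⊗ y ⊗ z` (resp. `x ⊗ y`) to a combination
of its permutations whose coefficients are rational functions of `u, v` and of the signs; these
agree for each of the finitely many sign patterns. Pure tensors of homogeneous vectors span,
so the identities hold.
-/

open TensorProduct

noncomputable section

/-- The flip operator `P : x ⊗ y ↦ y ⊗ x` on `V ⊗ V`. -/
def flipL (V : Type*) [AddCommGroup V] [Module ℂ V] :
    V ⊗[ℂ] V →ₗ[ℂ] V ⊗[ℂ] V :=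
  (TensorProduct.comm ℂ V V).toLinearMap

/-- `X_{1,2}` : the endomorphism `X` of `V ⊗ V` applied to the first two factors of
`V ⊗ V ⊗ V` and the identity on the third. -/
def op12 {V : Type*} [AddCommGroup V] [Module ℂ V]
    (X : V ⊗[ℂ] V →ₗ[ℂ] V ⊗[ℂ] V) :
    V ⊗[ℂ] (V ⊗[ℂ] V) →ₗ[ℂ] V ⊗[ℂ] (V ⊗[ℂ] V) :=
  (TensorProduct.assoc ℂ V V V).toLinearMap ∘ₗ LinearMap.rTensor V X ∘ₗ
    (TensorProduct.assoc ℂ V V V).symm.toLinearMap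

/-- `X_{2,3}` : the endomorphism `X` of `V ⊗ V` applied to the last two factors of
`V ⊗ V ⊗ V` and the identity on the first. -/
def op23 {V : Type*} [AddCommGroup V] [Module ℂ V]
    (X : V ⊗[ℂ] V →ₗ[ℂ] V ⊗[ℂ] V) :
    V ⊗[ℂ] (V ⊗[ℂ] V) →ₗ[ℂ] V ⊗[ℂ] (V ⊗[ℂ] V) :=
  LinearMap.lTensor V X

/-- `X_{1,3}` : the endomorphism `X` of `V ⊗ V` applied to the first and third factors of
`V ⊗ V ⊗ V` and the identity on the second, i.e. `X_{1,3} = P_{2,3} X_{1,2} P_{2,3}`. -/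
def op13 {V : Type*} [AddCommGroup V] [Module ℂ V]
    (X : V ⊗[ℂ] V →ₗ[ℂ] V ⊗[ℂ] V) :
    V ⊗[ℂ] (V ⊗[ℂ] V) →ₗ[ℂ] V ⊗[ℂ] (V ⊗[ℂ] V) :=
  op23 (flipL V) ∘ₗ op12 X ∘ₗ op23 (flipL V)

end

namespace TensorProduct

variable {R M N P : Type*} [CommSemiring R] [AddCommMonoid M] [Module R M] [AddCommMonoid N]
  [Module R N] [AddCommMonoid P] [Module R P]

theorem span_image2_tmul_eq_top {S : Set M} {T : Set N} (hS : Submodule.span R S = ⊤)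
    (hT : Submodule.span R T = ⊤) :
    Submodule.span R (Set.image2 (· ⊗ₜ[R] ·) S T) = ⊤ := by
  rw [← map₂_mk_top_top_eq_top, ← hS, ← hT, Submodule.map₂_span_span]
  rfl

theorem ext_of_span_eq_top {S : Set M} {T : Set N} (hS : Submodule.span R S = ⊤)
    (hT : Submodule.span R T = ⊤) {f g : M ⊗[R] N →ₗ[R] P}
    (h : ∀ m ∈ S, ∀ n ∈ T, f (m ⊗ₜ n) = g (m ⊗ₜ n)) : f = g :=
  LinearMap.ext_on (span_image2_tmul_eq_top hS hT) (Set.forall_mem_image2.mpr h)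

end TensorProduct

section SignDiagonal

variable {V : Type*} [AddCommGroup V] [Module ℂ V]

def IsSignDiagonalOn (I : V ⊗[ℂ] V →ₗ[ℂ] V ⊗[ℂ] V) (S : Set V) : Prop :=
  ∀ x ∈ S, ∀ y ∈ S, ∃ s : ℂ, (s = 1 ∨ s = -1) ∧
    I (x ⊗ₜ y) = s • x ⊗ₜ y ∧ I (y ⊗ₜ x) = s • y ⊗ₜ x

theorem yangBaxter_apply_tmul_of_signs (I : V ⊗[ℂ] V →ₗ[ℂ] V ⊗[ℂ] V) {u v : ℂ} (hu : u ≠ 0)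
    (hv : v ≠ 0) (huv : u + v ≠ 0) {x y z : V} {a b c : ℂ}
    (ha : a = 1 ∨ a = -1) (hb : b = 1 ∨ b = -1) (hc : c = 1 ∨ c = -1)
    (hxy : I (x ⊗ₜ y) = a • x ⊗ₜ y) (hyx : I (y ⊗ₜ x) = a • y ⊗ₜ x)
    (hxz : I (x ⊗ₜ z) = b • x ⊗ₜ z)
    (hyz : I (y ⊗ₜ z) = c • y ⊗ₜ z) (hzy : I (z ⊗ₜ y) = c • z ⊗ₜ y) :
    op12 (I - u⁻¹ • flipL V) (op13 (I - (u + v)⁻¹ • flipL V) (op23 (I - v⁻¹ • flipL V)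
      (x ⊗ₜ (y ⊗ₜ z)))) =
    op23 (I - v⁻¹ • flipL V) (op13 (I - (u + v)⁻¹ • flipL V) (op12 (I - u⁻¹ • flipL V)
      (x ⊗ₜ (y ⊗ₜ z)))) := by
  simp only [op12, op13, op23, flipL, LinearMap.comp_apply, LinearMap.sub_apply,
    LinearMap.smul_apply, LinearEquiv.coe_coe, map_sub, map_smul, LinearMap.lTensor_tmul,
    LinearMap.rTensor_tmul, assoc_tmul, assoc_symm_tmul, comm_tmul, tmul_sub, sub_tmul,
    tmul_smul, ← smul_tmul', hxy, hyx, hxz, hyz, hzy]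
  rcases ha with rfl | rfl <;> rcases hb with rfl | rfl <;> rcases hc with rfl | rfl <;>
    match_scalars <;> field_simp <;> ring

theorem unitarity_apply_tmul_of_sign (I : V ⊗[ℂ] V →ₗ[ℂ] V ⊗[ℂ] V) {u : ℂ} (hu : u ≠ 0)
    {x y : V} {a : ℂ} (ha : a = 1 ∨ a = -1)
    (hxy : I (x ⊗ₜ y) = a • x ⊗ₜ y) (hyx : I (y ⊗ₜ x) = a • y ⊗ₜ x) :
    (I - u⁻¹ • flipL V) (flipL V ((I - (-u)⁻¹ • flipL V) (flipL V (x ⊗ₜ y)))) =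
      ((u ^ 2 - 1) / u ^ 2) • x ⊗ₜ y := by
  simp only [flipL, LinearMap.sub_apply, LinearMap.smul_apply, LinearEquiv.coe_coe,
    map_sub, map_smul, comm_tmul, hxy, hyx]
  rcases ha with rfl | rfl <;> match_scalars <;> field_simp <;> ring

variable {I : V ⊗[ℂ] V →ₗ[ℂ] V ⊗[ℂ] V} {S : Set V}

theorem IsSignDiagonalOn.yangBaxter (hI : IsSignDiagonalOn I S)
    (hS : Submodule.span ℂ S = ⊤) {u v : ℂ} (hu : u ≠ 0) (hv : v ≠ 0) (huv : u + v ≠ 0) :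
    op12 (I - u⁻¹ • flipL V) ∘ₗ op13 (I - (u + v)⁻¹ • flipL V) ∘ₗ op23 (I - v⁻¹ • flipL V) =
      op23 (I - v⁻¹ • flipL V) ∘ₗ op13 (I - (u + v)⁻¹ • flipL V) ∘ₗ
        op12 (I - u⁻¹ • flipL V) := by
  refine ext_of_span_eq_top hS (span_image2_tmul_eq_top hS hS) fun x hx _ hyz => ?_
  obtain ⟨y, hy, z, hz, rfl⟩ := hyz
  obtain ⟨a, ha, hxy, hyx⟩ := hI x hx y hy
  obtain ⟨b, hb, hxz, -⟩ := hI x hx z hz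
  obtain ⟨c, hc, hyz, hzy⟩ := hI y hy z hz
  exact yangBaxter_apply_tmul_of_signs I hu hv huv ha hb hc hxy hyx hxz hyz hzy

theorem IsSignDiagonalOn.unitarity (hI : IsSignDiagonalOn I S)
    (hS : Submodule.span ℂ S = ⊤) {u : ℂ} (hu : u ≠ 0) :
    (I - u⁻¹ • flipL V) ∘ₗ (flipL V ∘ₗ (I - (-u)⁻¹ • flipL V) ∘ₗ flipL V) =
      ((u ^ 2 - 1) / u ^ 2) • LinearMap.id :=
  ext_of_span_eq_top hS hS fun x hx y hy => by
    obtain ⟨a, ha, hxy, hyx⟩ := hI x hx y hy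
    exact unitarity_apply_tmul_of_sign I hu ha hxy hyx

end SignDiagonal

theorem span_range_inl_union_range_inr_eq_top (V₀ V₁ : Type*) [AddCommGroup V₀] [Module ℂ V₀]
    [AddCommGroup V₁] [Module ℂ V₁] :
    Submodule.span ℂ (Set.range (LinearMap.inl ℂ V₀ V₁) ∪ Set.range (LinearMap.inr ℂ V₀ V₁)) =
      ⊤ := by
  rw [Submodule.span_union, ← LinearMap.coe_range, ← LinearMap.coe_range, Submodule.span_eq,
    Submodule.span_eq, LinearMap.sup_range_inl_inr]

theorem super_yang_solution_general
    (V₀ V₁ : Type*) [AddCommGroup V₀] [Module ℂ V₀] [AddCommGroup V₁] [Module ℂ V₁]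
    (I : (V₀ × V₁) ⊗[ℂ] (V₀ × V₁) →ₗ[ℂ] (V₀ × V₁) ⊗[ℂ] (V₀ × V₁))
    (hI00 : ∀ (x y : V₀), I (((x, 0) : V₀ × V₁) ⊗ₜ[ℂ] ((y, 0) : V₀ × V₁)) =
      ((x, 0) : V₀ × V₁) ⊗ₜ[ℂ] ((y, 0) : V₀ × V₁))
    (hI01 : ∀ (x : V₀) (y : V₁), I (((x, 0) : V₀ × V₁) ⊗ₜ[ℂ] ((0, y) : V₀ × V₁)) =
      ((x, 0) : V₀ × V₁) ⊗ₜ[ℂ] ((0, y) : V₀ × V₁))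
    (hI10 : ∀ (x : V₁) (y : V₀), I (((0, x) : V₀ × V₁) ⊗ₜ[ℂ] ((y, 0) : V₀ × V₁)) =
      ((0, x) : V₀ × V₁) ⊗ₜ[ℂ] ((y, 0) : V₀ × V₁))
    (hI11 : ∀ (x y : V₁), I (((0, x) : V₀ × V₁) ⊗ₜ[ℂ] ((0, y) : V₀ × V₁)) =
      -(((0, x) : V₀ × V₁) ⊗ₜ[ℂ] ((0, y) : V₀ × V₁)))
    (R : ℂ → ((V₀ × V₁) ⊗[ℂ] (V₀ × V₁) →ₗ[ℂ] (V₀ × V₁) ⊗[ℂ] (V₀ × V₁)))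
    (hR : ∀ u : ℂ, R u = I - u⁻¹ • flipL (V₀ × V₁)) :
    (∀ u v : ℂ, u ≠ 0 → v ≠ 0 → u + v ≠ 0 →
      op12 (R u) ∘ₗ op13 (R (u + v)) ∘ₗ op23 (R v) =
      op23 (R v) ∘ₗ op13 (R (u + v)) ∘ₗ op12 (R u)) ∧
    (∀ u : ℂ, u ≠ 0 →
      R u ∘ₗ (flipL (V₀ × V₁) ∘ₗ R (-u) ∘ₗ flipL (V₀ × V₁)) =
      ((u ^ 2 - 1) / u ^ 2) • LinearMap.id) := by
  obtain rfl : R = fun u => I - u⁻¹ • flipL (V₀ × V₁) := funext hR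
  have hI : IsSignDiagonalOn I
      (Set.range (LinearMap.inl ℂ V₀ V₁) ∪ Set.range (LinearMap.inr ℂ V₀ V₁)) := by
    rintro _ (⟨x, rfl⟩ | ⟨x, rfl⟩) _ (⟨y, rfl⟩ | ⟨y, rfl⟩)
    · exact ⟨1, .inl rfl, (hI00 x y).trans (one_smul ℂ _).symm,
        (hI00 y x).trans (one_smul ℂ _).symm⟩
    · exact ⟨1, .inl rfl, (hI01 x y).trans (one_smul ℂ _).symm,
        (hI10 y x).trans (one_smul ℂ _).symm⟩
    · exact ⟨1, .inl rfl, (hI10 x y).trans (one_smul ℂ _).symm,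
        (hI01 y x).trans (one_smul ℂ _).symm⟩
    · exact ⟨-1, .inr rfl, (hI11 x y).trans (neg_one_smul ℂ _).symm,
        (hI11 y x).trans (neg_one_smul ℂ _).symm⟩
  have hS := span_range_inl_union_range_inr_eq_top V₀ V₁
  exact ⟨fun u v hu hv huv => hI.yangBaxter hS hu hv huv, fun u hu => hI.unitarity hS hu⟩

/-- Let `V = V₀ ⊕ V₁` be a ℤ/2ℤ-graded finite-dimensional complex vector
space and let `Ĩ` be the endomorphism of `V ⊗ V` multiplying `x ⊗ y` by `(−1)^{ab}` for
homogeneous `x ∈ V_a`, `y ∈ V_b`. Then `R(u) := Ĩ − P/u` satisfies (1) the Yang--Baxter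
equation for `u, v, u+v ≠ 0` and (2) the unitarity condition
`R(u) · P R(−u) P = ((u²−1)/u²) Id` for `u ≠ 0`. -/
theorem super_yang_solution
    (V₀ V₁ : Type*) [AddCommGroup V₀] [Module ℂ V₀] [AddCommGroup V₁] [Module ℂ V₁]
    [FiniteDimensional ℂ V₀] [FiniteDimensional ℂ V₁]
    (I : (V₀ × V₁) ⊗[ℂ] (V₀ × V₁) →ₗ[ℂ] (V₀ × V₁) ⊗[ℂ] (V₀ × V₁))
    (hI00 : ∀ (x y : V₀), I (((x, 0) : V₀ × V₁) ⊗ₜ[ℂ] ((y, 0) : V₀ × V₁)) =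
      ((x, 0) : V₀ × V₁) ⊗ₜ[ℂ] ((y, 0) : V₀ × V₁))
    (hI01 : ∀ (x : V₀) (y : V₁), I (((x, 0) : V₀ × V₁) ⊗ₜ[ℂ] ((0, y) : V₀ × V₁)) =
      ((x, 0) : V₀ × V₁) ⊗ₜ[ℂ] ((0, y) : V₀ × V₁))
    (hI10 : ∀ (x : V₁) (y : V₀), I (((0, x) : V₀ × V₁) ⊗ₜ[ℂ] ((y, 0) : V₀ × V₁)) =
      ((0, x) : V₀ × V₁) ⊗ₜ[ℂ] ((y, 0) : V₀ × V₁))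
    (hI11 : ∀ (x y : V₁), I (((0, x) : V₀ × V₁) ⊗ₜ[ℂ] ((0, y) : V₀ × V₁)) =
      -(((0, x) : V₀ × V₁) ⊗ₜ[ℂ] ((0, y) : V₀ × V₁)))
    (R : ℂ → ((V₀ × V₁) ⊗[ℂ] (V₀ × V₁) →ₗ[ℂ] (V₀ × V₁) ⊗[ℂ] (V₀ × V₁)))
    (hR : ∀ u : ℂ, R u = I - u⁻¹ • flipL (V₀ × V₁)) :
    (∀ u v : ℂ, u ≠ 0 → v ≠ 0 → u + v ≠ 0 →
      op12 (R u) ∘ₗ op13 (R (u + v)) ∘ₗ op23 (R v) =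
      op23 (R v) ∘ₗ op13 (R (u + v)) ∘ₗ op12 (R u)) ∧
    (∀ u : ℂ, u ≠ 0 →
      R u ∘ₗ (flipL (V₀ × V₁) ∘ₗ R (-u) ∘ₗ flipL (V₀ × V₁)) =
      ((u ^ 2 - 1) / u ^ 2) • LinearMap.id) :=
  super_yang_solution_general V₀ V₁ I hI00 hI01 hI10 hI11 R hR
end

section
/- Let A be a unital associative ℂ-algebra, q ∈ ℂ with q ≠ 0, and a, b ∈ A satisfying the quadratic relations a² = (q−q⁻¹)a + 1, b² = (q−q⁻¹)b + 1 and the braid relation a b a = b a b. For α ∈ ℂ with α ∉ {0,1}, set a(α) := a + (q−q⁻¹)/(α⁻¹−1)·1 and b(α) := b + (q−q⁻¹)/(α⁻¹−1)·1. Then for all α, β ∈ ℂ with α, β, αβ ∉ {0,1}: a(α) b(αβ) a(β) = b(β) a(αβ) b(α). -/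
/-!
Expanding `(a + x)(b + y)(a + z)` with `a² = s a + 1` leaves `aba`, `ab`, `ba`, `b`, `1` with
coefficients symmetric under `a ↔ b, x ↔ z`, and `a` with coefficient `y (s + x + z)`; the mirrored
product has `x z` there instead. So the braid relation for the shifted elements reduces to the
scalar identity `y (s + x + z) = x z`. For `x = s/u`, `y = s/v`, `z = s/w` with `u = α⁻¹ - 1`,
`w = β⁻¹ - 1`, `v = (αβ)⁻¹ - 1`, multiplicativity of `α ↦ α⁻¹` gives `v + 1 = (u + 1)(w + 1)`,
i.e. `v = u w + u + w`, and then the identity is `s² (uw + u + w) / (uvw) = s² / (uw)`.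
-/

-- The Baxterized element of the paper is `a(α) = a + baxterShift (q - q⁻¹) α • 1`.
def baxterShift {K : Type*} [Field K] (s α : K) : K := s / (α⁻¹ - 1)

theorem baxterShift_mul_add_add {K : Type*} [Field K] {s α β : K} (hα : α ≠ 1) (hβ : β ≠ 1)
    (hαβ : α * β ≠ 1) :
    baxterShift s (α * β) * (s + baxterShift s α + baxterShift s β) =
      baxterShift s α * baxterShift s β := by
  have hu : α⁻¹ - 1 ≠ 0 := sub_ne_zero.2 (inv_ne_one.2 hα)
  have hw : β⁻¹ - 1 ≠ 0 := sub_ne_zero.2 (inv_ne_one.2 hβ)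
  have hv : (α * β)⁻¹ - 1 ≠ 0 := sub_ne_zero.2 (inv_ne_one.2 hαβ)
  have hsum : (α * β)⁻¹ - 1 = (α⁻¹ - 1) * (β⁻¹ - 1) + (α⁻¹ - 1) + (β⁻¹ - 1) := by
    rw [mul_inv]
    ring
  unfold baxterShift
  rw [hsum] at hv ⊢
  generalize α⁻¹ - 1 = u at hu hv ⊢
  generalize β⁻¹ - 1 = w at hw hv ⊢
  rw [div_mul_eq_mul_div, div_eq_iff hv]
  field_simp
  ring

section Hecke

variable {R A : Type*} [CommRing R] [Ring A] [Algebra R A] {s : R} {a b : A}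

theorem hecke_shifted_triple_product (ha : a ^ 2 = s • a + 1) (b : A) (x y z : R) :
    (a + x • 1) * (b + y • 1) * (a + z • 1) =
      a * b * a + z • (a * b) + x • (b * a) + (y * (s + x + z)) • a + (x * z) • b +
        (y + x * y * z) • 1 := by
  have ha' : a * a = s • a + 1 := by rw [← sq, ha]
  simp only [mul_add, add_mul, smul_mul_assoc, mul_smul_comm, one_mul, mul_one, ha']
  module

theorem hecke_shifted_braid (ha : a ^ 2 = s • a + 1) (hb : b ^ 2 = s • b + 1)
    (hbr : a * b * a = b * a * b) {x y z : R} (hxyz : y * (s + x + z) = x * z) :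
    (a + x • 1) * (b + y • 1) * (a + z • 1) = (b + z • 1) * (a + y • 1) * (b + x • 1) := by
  rw [hecke_shifted_triple_product ha, hecke_shifted_triple_product hb, hbr, hxyz,
    add_right_comm s z, hxyz, mul_comm z x]
  module

end Hecke

theorem baxterized_hecke_braid_general
    (A : Type*) [Ring A] [Algebra ℂ A] (q : ℂ) (a b : A)
    (ha : a ^ 2 = (q - q⁻¹) • a + 1)
    (hb : b ^ 2 = (q - q⁻¹) • b + 1)
    (hbr : a * b * a = b * a * b)
    (α β : ℂ) (hα1 : α ≠ 1) (hβ1 : β ≠ 1)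
    (hαβ1 : α * β ≠ 1) :
    (a + ((q - q⁻¹) / (α⁻¹ - 1)) • (1 : A)) *
      (b + ((q - q⁻¹) / ((α * β)⁻¹ - 1)) • (1 : A)) *
      (a + ((q - q⁻¹) / (β⁻¹ - 1)) • (1 : A)) =
    (b + ((q - q⁻¹) / (β⁻¹ - 1)) • (1 : A)) *
      (a + ((q - q⁻¹) / ((α * β)⁻¹ - 1)) • (1 : A)) *
      (b + ((q - q⁻¹) / (α⁻¹ - 1)) • (1 : A)) :=
  hecke_shifted_braid ha hb hbr (baxterShift_mul_add_add hα1 hβ1 hαβ1)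

/-- Baxterized elements in an algebra with two Hecke-type generators:
if `a² = (q−q⁻¹)a + 1`, `b² = (q−q⁻¹)b + 1` and `aba = bab`, then the Baxterized elements
`a(α) := a + (q−q⁻¹)/(α⁻¹−1)` satisfy `a(α) b(αβ) a(β) = b(β) a(αβ) b(α)` for all
`α, β` with `α, β, αβ ∉ {0,1}`. -/
theorem baxterized_hecke_braid
    (A : Type*) [Ring A] [Algebra ℂ A] (q : ℂ) (hq : q ≠ 0) (a b : A)
    (ha : a ^ 2 = (q - q⁻¹) • a + 1)
    (hb : b ^ 2 = (q - q⁻¹) • b + 1)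
    (hbr : a * b * a = b * a * b)
    (α β : ℂ) (hα0 : α ≠ 0) (hα1 : α ≠ 1) (hβ0 : β ≠ 0) (hβ1 : β ≠ 1)
    (hαβ0 : α * β ≠ 0) (hαβ1 : α * β ≠ 1) :
    (a + ((q - q⁻¹) / (α⁻¹ - 1)) • (1 : A)) *
      (b + ((q - q⁻¹) / ((α * β)⁻¹ - 1)) • (1 : A)) *
      (a + ((q - q⁻¹) / (β⁻¹ - 1)) • (1 : A)) =
    (b + ((q - q⁻¹) / (β⁻¹ - 1)) • (1 : A)) *
      (a + ((q - q⁻¹) / ((α * β)⁻¹ - 1)) • (1 : A)) *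
      (b + ((q - q⁻¹) / (α⁻¹ - 1)) • (1 : A)) :=
  baxterized_hecke_braid_general A q a b ha hb hbr α β hα1 hβ1 hαβ1
end
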